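/- Fix an integer r ≥ 3 and a real number c > 0. Let γ be a 3-Frenet helix in the de Sitter space S³₁(c) with constant curvatures κ, τ > 0 and signs (ε₁,ε₂,ε₃) ∈ {−1,1}³; since the frame {T,N,B} is an orthonormal basis of the index-1 tangent space, exactly one of ε₁, ε₂, ε₃ equals −1. Then: (i) if ε₂ = 1 (N space-like), γ is proper r-harmonic (τ_r(γ) ≡ 0) if and only if [r > 3 and κ² = τ²], or [κ² ≥ c(r−1) and τ² = (2κ² − c + √(c² + 4c(r−2)κ²))/2 or τ² = (2κ² − c − √(c² + 4c(r−2)κ²))/2], or [κ² < c(r−1) and τ² = (2κ² − c + √(c² + 4c(r−2)κ²))/2]; (ii) if ε₂ = −1 (N time-like), γ is never proper r-harmonic. -/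

import Mathlib

open scoped BigOperators

noncomputable section

/-- The pseudo-Euclidean bilinear form of index `t` on `ℝⁿ` (modelled as `Fin n → ℝ`):
`⟪x,y⟫_t = −∑_{i<t} x_i y_i + ∑_{i≥t} x_i y_i`. -/
def pform (t : ℕ) {n : ℕ} (x y : Fin n → ℝ) : ℝ :=
  ∑ i : Fin n, (if i.val < t then -(x i * y i) else x i * y i)

/-- The covariant derivative along `γ` induced on the quadric `⟪x,x⟫_t = 1/c`:
`∇X = X′ − c⟪X′,γ⟫_t γ`. -/
def cov (t : ℕ) {n : ℕ} (c : ℝ) (γ X : ℝ → Fin n → ℝ) : ℝ → Fin n → ℝ :=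
  fun s => deriv X s - (c * pform t (deriv X s) (γ s)) • γ s

/-- The curvature operator of the space form: `R(X,Y)Z = c(⟪Y,Z⟫_t X − ⟪X,Z⟫_t Y)`. -/
def curvOp (t : ℕ) {n : ℕ} (c : ℝ) (X Y Z : Fin n → ℝ) : Fin n → ℝ :=
  c • (pform t Y Z • X - pform t X Z • Y)

/-- The `r`-tension field of a curve `γ` in the space form:
`τ_r(γ) = ∇^{2r−1}T + ∑_{ℓ=0}^{r−2} (−1)^ℓ R(∇^{2r−3−ℓ}T, ∇^ℓT)T` with `T = γ′`. -/
def tensionField (t : ℕ) {n : ℕ} (c : ℝ) (r : ℕ) (γ : ℝ → Fin n → ℝ) (s : ℝ) : Fin n → ℝ :=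
  (cov t c γ)^[2*r-1] (deriv γ) s
    + ∑ ℓ ∈ Finset.range (r-1), ((-1 : ℝ)^ℓ) •
        curvOp t c ((cov t c γ)^[2*r-3-ℓ] (deriv γ) s) ((cov t c γ)^[ℓ] (deriv γ) s) (deriv γ s)

/- ### Auxiliary lemmas -/

lemma pform_smul_left {t n : ℕ} (a : ℝ) (x z : Fin n → ℝ) :
    pform t (a • x) z = a * pform t x z := by
  simp only [pform, Finset.mul_sum, Pi.smul_apply, smul_eq_mul]
  exact Finset.sum_congr rfl fun i _ => by split_ifs <;> ring

lemma pform_add_left {t n : ℕ} (x y z : Fin n → ℝ) :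
    pform t (x + y) z = pform t x z + pform t y z := by
  simp only [pform, ← Finset.sum_add_distrib, Pi.add_apply]
  exact Finset.sum_congr rfl fun i _ => by split_ifs <;> ring

lemma pform_comm {t n : ℕ} (x y : Fin n → ℝ) : pform t x y = pform t y x := by
  simp only [pform]; exact Finset.sum_congr rfl fun i _ => by split_ifs <;> ring

lemma cov_congr_on {c : ℝ} {γ X Y : ℝ → Fin 4 → ℝ} {I : Set ℝ} (hI : IsOpen I)
    (h : ∀ u ∈ I, X u = Y u) {s : ℝ} (hs : s ∈ I) :
    cov 1 c γ X s = cov 1 c γ Y s := by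
  have hd : deriv X s = deriv Y s :=
    Filter.EventuallyEq.deriv_eq (Filter.eventuallyEq_of_mem (hI.mem_nhds hs) fun u hu => h u hu)
  simp only [cov, hd]

lemma cov_comb {c : ℝ} (a b d : ℝ) {γ X Y Z : ℝ → Fin 4 → ℝ} {s : ℝ}
    (hX : DifferentiableAt ℝ X s) (hY : DifferentiableAt ℝ Y s)
    (hZ : DifferentiableAt ℝ Z s) :
    cov 1 c γ (fun u => a • X u + b • Y u + d • Z u) s
      = a • cov 1 c γ X s + b • cov 1 c γ Y s + d • cov 1 c γ Z s := by
  have hd : deriv (fun u => a • X u + b • Y u + d • Z u) s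
      = a • deriv X s + b • deriv Y s + d • deriv Z s := by
    rw [deriv_fun_add (f := fun u => a • X u + b • Y u) (g := fun u => d • Z u) ((hX.const_smul a).add (hY.const_smul b)) (hZ.const_smul d),
        deriv_fun_add (f := fun u => a • X u) (g := fun u => b • Y u) (hX.const_smul a) (hY.const_smul b),
        deriv_fun_const_smul a hX, deriv_fun_const_smul b hY, deriv_fun_const_smul d hZ]
  simp only [cov, hd, pform_add_left, pform_smul_left]
  module

/-- Frame coefficients of the iterated covariant derivatives of `T`. -/
def coefT (e1 e2 κ μ : ℝ) (k : ℕ) : ℝ :=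
  if k = 0 then 1 else if Even k then -(e1 * e2 * κ ^ 2) * μ ^ (k / 2 - 1) else 0
def coefN (e2 κ μ : ℝ) (k : ℕ) : ℝ := if Even k then 0 else e2 * κ * μ ^ (k / 2)
def coefB (e2 e3 κ τ μ : ℝ) (k : ℕ) : ℝ :=
  if k = 0 then 0 else if Even k then e2 * e3 * κ * τ * μ ^ (k / 2 - 1) else 0

lemma coefT_odd (e1 e2 κ μ : ℝ) {k : ℕ} (hk : ¬ Even k) : coefT e1 e2 κ μ k = 0 := by
  have h0 : k ≠ 0 := fun h => hk (h ▸ Even.zero)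
  simp [coefT, h0, hk]
lemma coefB_odd (e2 e3 κ τ μ : ℝ) {k : ℕ} (hk : ¬ Even k) : coefB e2 e3 κ τ μ k = 0 := by
  have h0 : k ≠ 0 := fun h => hk (h ▸ Even.zero)
  simp [coefB, h0, hk]
lemma coefN_even (e2 κ μ : ℝ) {k : ℕ} (hk : Even k) : coefN e2 κ μ k = 0 := by
  simp [coefN, hk]
lemma coefN_odd (e2 κ μ : ℝ) {k : ℕ} (hk : ¬ Even k) :
    coefN e2 κ μ k = e2 * κ * μ ^ (k / 2) := by simp [coefN, hk]
lemma coefT_even (e1 e2 κ μ : ℝ) {k : ℕ} (hk : Even k) (h0 : k ≠ 0) :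
    coefT e1 e2 κ μ k = -(e1 * e2 * κ ^ 2) * μ ^ (k / 2 - 1) := by simp [coefT, hk, h0]
lemma coefB_even (e2 e3 κ τ μ : ℝ) {k : ℕ} (hk : Even k) (h0 : k ≠ 0) :
    coefB e2 e3 κ τ μ k = e2 * e3 * κ * τ * μ ^ (k / 2 - 1) := by simp [coefB, hk, h0]

lemma coef_step (e1 e2 e3 κ τ μ : ℝ)
    (hμ : μ = -e2 * (e1 * κ ^ 2 + e3 * τ ^ 2)) (k : ℕ) :
    coefT e1 e2 κ μ (k+1) = -(e1 * κ) * coefN e2 κ μ k ∧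
    coefN e2 κ μ (k+1) = e2 * κ * coefT e1 e2 κ μ k - e2 * τ * coefB e2 e3 κ τ μ k ∧
    coefB e2 e3 κ τ μ (k+1) = e3 * τ * coefN e2 κ μ k := by
  subst hμ
  rcases Nat.even_or_odd k with he | ho
  · have h1 : ¬ Even (k+1) := by rw [Nat.even_iff] at *; omega
    refine ⟨by rw [coefT_odd _ _ _ _ h1, coefN_even _ _ _ he]; ring, ?_, by
      rw [coefB_odd _ _ _ _ _ h1, coefN_even _ _ _ he]; ring⟩
    rw [coefN_odd _ _ _ h1]
    rcases Nat.eq_zero_or_pos k with h0 | hpos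
    · subst h0; simp [coefT, coefB]
    · have hk0 : k ≠ 0 := hpos.ne'
      rw [coefT_even _ _ _ _ he hk0, coefB_even _ _ _ _ _ he hk0]
      have hdiv : (k+1)/2 = (k/2 - 1) + 1 := by rw [Nat.even_iff] at he; omega
      rw [hdiv, pow_succ]; ring
  · have hone : ¬ Even k := Nat.not_even_iff_odd.mpr ho
    have he1 : Even (k+1) := by rw [Nat.even_iff]; rw [Nat.odd_iff] at ho; omega
    have hdiv : (k+1)/2 - 1 = k/2 := by rw [Nat.odd_iff] at ho; omega
    refine ⟨?_, ?_, ?_⟩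
    · rw [coefT_even _ _ _ _ he1 (by omega), coefN_odd _ _ _ hone, hdiv]; ring
    · rw [coefN_even _ _ _ he1, coefT_odd _ _ _ _ hone, coefB_odd _ _ _ _ _ hone]; ring
    · rw [coefB_even _ _ _ _ _ he1 (by omega), coefN_odd _ _ _ hone, hdiv]; ring

lemma coef_term_eval (r ℓ : ℕ) (hr : 3 ≤ r) (hℓ1 : 1 ≤ ℓ) (hℓ2 : ℓ ≤ r - 2)
    (c e1 e2 κ μ : ℝ) (he1 : e1*e1 = 1) (he2 : e2*e2 = 1) :
    c * e1 * (-1:ℝ)^ℓ * (coefT e1 e2 κ μ ℓ * coefN e2 κ μ (2*r-3-ℓ)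
      - coefT e1 e2 κ μ (2*r-3-ℓ) * coefN e2 κ μ ℓ) = -(c * κ^3 * μ^(r-3)) := by
  rcases Nat.even_or_odd ℓ with he | ho
  · have hne : (-1:ℝ)^ℓ = 1 := he.neg_one_pow
    have h2r : ¬ Even (2*r-3-ℓ) := by rw [Nat.even_iff] at *; omega
    rw [hne, coefT_even _ _ _ _ he (by omega), coefT_odd _ _ _ _ h2r,
        coefN_odd _ _ _ h2r, coefN_even _ _ _ he]
    have hexp : μ^(ℓ/2-1) * μ^((2*r-3-ℓ)/2) = μ^(r-3) := by
      rw [← pow_add]; congr 1; rw [Nat.even_iff] at he; omega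
    linear_combination (-(c*κ^3)*e2*e2*μ^(ℓ/2-1)*μ^((2*r-3-ℓ)/2))*he1
      + (-(c*κ^3)*μ^(ℓ/2-1)*μ^((2*r-3-ℓ)/2))*he2 + (-(c*κ^3))*hexp
  · have hone : ¬ Even ℓ := Nat.not_even_iff_odd.mpr ho
    have hne : (-1:ℝ)^ℓ = -1 := ho.neg_one_pow
    have h2r : Even (2*r-3-ℓ) := by rw [Nat.even_iff]; rw [Nat.odd_iff] at ho; omega
    rw [hne, coefT_odd _ _ _ _ hone, coefN_odd _ _ _ hone,
        coefT_even _ _ _ _ h2r (by rw [Nat.odd_iff] at ho; omega)]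
    have hexp : μ^((2*r-3-ℓ)/2-1) * μ^(ℓ/2) = μ^(r-3) := by
      rw [← pow_add]; congr 1; rw [Nat.odd_iff] at ho; omega
    linear_combination (-(c*κ^3)*e2*e2*μ^((2*r-3-ℓ)/2-1)*μ^(ℓ/2))*he1
      + (-(c*κ^3)*μ^((2*r-3-ℓ)/2-1)*μ^(ℓ/2))*he2 + (-(c*κ^3))*hexp

lemma sum_eval (r : ℕ) (hr : 3 ≤ r) (c e1 e2 κ μ : ℝ) (he1 : e1*e1=1) (he2 : e2*e2=1) :
    (∑ ℓ ∈ Finset.range (r-1), c * e1 * (-1:ℝ)^ℓ *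
      (coefT e1 e2 κ μ ℓ * coefN e2 κ μ (2*r-3-ℓ) - coefT e1 e2 κ μ (2*r-3-ℓ) * coefN e2 κ μ ℓ))
    = c*e1*e2*κ*μ^(r-2) - c*κ^3*((r:ℝ)-2)*μ^(r-3) := by
  rw [show r - 1 = (r-2) + 1 by omega, Finset.sum_range_succ']
  rw [Finset.sum_congr rfl (fun i hi => coef_term_eval r (i+1) hr (by omega)
      (by simp only [Finset.mem_range] at hi; omega) c e1 e2 κ μ he1 he2)]
  rw [Finset.sum_const, Finset.card_range]
  have hodd : ¬ Even (2*r-3-0) := by rw [Nat.even_iff]; omega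
  rw [show coefT e1 e2 κ μ 0 = 1 by simp [coefT], coefN_even e2 κ μ (Even.zero),
      coefN_odd _ _ _ hodd, coefT_odd _ _ _ _ hodd]
  rw [show (2*r-3-0)/2 = r-2 by omega]
  rw [nsmul_eq_mul, Nat.cast_sub (by omega : 2 ≤ r)]
  push_cast
  ring

lemma scalar_case1 (r : ℕ) (hr : 3 ≤ r) (c κ τ e1 μ Cv : ℝ) (hc : 0 < c) (hκ : 0 < κ)
    (hτ : 0 < τ)
    (hsgn : (e1 = -1 ∧ μ = κ^2 - τ^2) ∨ (e1 = 1 ∧ μ = τ^2 - κ^2))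
    (hCv : Cv = κ*μ^(r-1) + c*e1*κ*μ^(r-2) - c*κ^3*((r:ℝ)-2)*μ^(r-3)) :
    (Cv = 0) ↔
      ((3 < r ∧ κ ^ 2 = τ ^ 2) ∨
       (c * ((r : ℝ) - 1) ≤ κ ^ 2 ∧
         (τ ^ 2 = (2 * κ ^ 2 - c + Real.sqrt (c ^ 2 + 4 * c * ((r : ℝ) - 2) * κ ^ 2)) / 2 ∨
          τ ^ 2 = (2 * κ ^ 2 - c - Real.sqrt (c ^ 2 + 4 * c * ((r : ℝ) - 2) * κ ^ 2)) / 2)) ∨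
       (κ ^ 2 < c * ((r : ℝ) - 1) ∧
         τ ^ 2 = (2 * κ ^ 2 - c + Real.sqrt (c ^ 2 + 4 * c * ((r : ℝ) - 2) * κ ^ 2)) / 2)) := by
  have hr3 : (3:ℝ) ≤ (r:ℝ) := by exact_mod_cast hr
  have hD0 : 0 ≤ c ^ 2 + 4 * c * ((r : ℝ) - 2) * κ ^ 2 := by
    nlinarith [sq_nonneg c, mul_nonneg (mul_nonneg hc.le (by linarith : (0:ℝ) ≤ (r:ℝ)-2)) (sq_nonneg κ)]
  set sq := Real.sqrt (c ^ 2 + 4 * c * ((r : ℝ) - 2) * κ ^ 2) with hsq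
  have hs : sq ^ 2 = c ^ 2 + 4 * c * ((r : ℝ) - 2) * κ ^ 2 := Real.sq_sqrt hD0
  have hsn : 0 ≤ sq := Real.sqrt_nonneg _
  have hfac : μ^2 + c*e1*μ - c*((r:ℝ)-2)*κ^2
      = (τ^2 - (2*κ^2 - c + sq)/2) * (τ^2 - (2*κ^2 - c - sq)/2) := by
    rcases hsgn with ⟨he, hμ⟩ | ⟨he, hμ⟩ <;> subst he <;> subst hμ <;>
      linear_combination ((1:ℝ)/4)*hs
  have hkey : Cv = κ * μ^(r-3) * (μ^2 + c*e1*μ - c*((r:ℝ)-2)*κ^2) := by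
    rw [hCv, show r-1 = (r-3)+2 by omega, show r-2 = (r-3)+1 by omega, pow_add, pow_add]; ring
  rw [hkey]
  constructor
  · intro h
    rcases mul_eq_zero.1 h with h' | hQ
    · rcases mul_eq_zero.1 h' with h'' | h''
      · exact absurd h'' (ne_of_gt hκ)
      · have hr4 : r - 3 ≠ 0 := by
          intro h0; rw [h0, pow_zero] at h''; norm_num at h''
        have hμ0 : μ = 0 := pow_eq_zero_iff hr4 |>.1 h''
        refine Or.inl ⟨by omega, ?_⟩
        rcases hsgn with ⟨_, hμ⟩ | ⟨_, hμ⟩ <;> rw [hμ0] at hμ <;> linarith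
    · rw [hfac] at hQ
      rcases mul_eq_zero.1 hQ with h' | h'
      · have hx : τ^2 = (2*κ^2 - c + sq)/2 := by linarith [sub_eq_zero.1 h']
        rcases le_or_gt (c*((r:ℝ)-1)) (κ^2) with hle | hlt
        · exact Or.inr (Or.inl ⟨hle, Or.inl hx⟩)
        · exact Or.inr (Or.inr ⟨hlt, hx⟩)
      · have hx : τ^2 = (2*κ^2 - c - sq)/2 := by linarith [sub_eq_zero.1 h']
        have hτ2 : 0 < τ^2 := by positivity
        have h1 : 0 < 2*κ^2 - c - sq := by linarith
        have h2 : 0 < 2*κ^2 - c + sq := by linarith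
        have hle : c*((r:ℝ)-1) ≤ κ^2 := by nlinarith [mul_pos h1 h2, mul_pos hκ hκ]
        exact Or.inr (Or.inl ⟨hle, Or.inr hx⟩)
  · rintro (⟨hr4, hkt⟩ | ⟨_, hx | hx⟩ | ⟨_, hx⟩) <;>
      [skip; (rw [hfac, hx]; ring); (rw [hfac, hx]; ring); (rw [hfac, hx]; ring)]
    have hμ0 : μ = 0 := by rcases hsgn with ⟨_, hμ⟩ | ⟨_, hμ⟩ <;> rw [hμ] <;> linarith [hkt]
    rw [hμ0, zero_pow (by omega : r - 3 ≠ 0)]; ring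

lemma scalar_case2 (r : ℕ) (hr : 3 ≤ r) (c κ τ μ Cv : ℝ) (hc : 0 < c) (hκ : 0 < κ)
    (hτ : 0 < τ) (hμ : μ = κ^2 + τ^2)
    (hCv : Cv = -(κ*μ^(r-1)) - c*κ*μ^(r-2) - c*κ^3*((r:ℝ)-2)*μ^(r-3)) : Cv ≠ 0 := by
  have hr3 : (3:ℝ) ≤ (r:ℝ) := by exact_mod_cast hr
  have hμ0 : 0 < μ := by rw [hμ]; positivity
  have h1 : 0 < κ*μ^(r-1) := by positivity
  have h2 : 0 < c*κ*μ^(r-2) := by positivity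
  have h3 : 0 ≤ c*κ^3*((r:ℝ)-2)*μ^(r-3) := by
    have h4 : (0:ℝ) ≤ (r:ℝ)-2 := by linarith
    positivity
  rw [hCv]; intro h; linarith

/-- `r`-harmonicity (`r ≥ 3`) of a `3`-Frenet helix in the de Sitter space
`S³₁(c) ⊂ ℝ⁴₁` (`c > 0`), according to the causal character of the normal `N`. -/
theorem stmt_9 (r : ℕ) (hr : 3 ≤ r) (c : ℝ) (hc : 0 < c)
    (I : Set ℝ) (hIopen : IsOpen I) (hIne : I.Nonempty)
    (γ N B : ℝ → Fin 4 → ℝ)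
    (hγ : ContDiffOn ℝ (⊤ : ℕ∞) γ I) (hN : ContDiffOn ℝ (⊤ : ℕ∞) N I) (hB : ContDiffOn ℝ (⊤ : ℕ∞) B I)
    (ε₁ ε₂ ε₃ : ℝ)
    (hone : (ε₁ = -1 ∧ ε₂ = 1 ∧ ε₃ = 1) ∨ (ε₁ = 1 ∧ ε₂ = -1 ∧ ε₃ = 1) ∨
            (ε₁ = 1 ∧ ε₂ = 1 ∧ ε₃ = -1))
    (κ τ : ℝ) (hκ : 0 < κ) (hτ : 0 < τ)
    (hquad : ∀ s ∈ I, pform 1 (γ s) (γ s) = 1 / c)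
    (hTT : ∀ s ∈ I, pform 1 (deriv γ s) (deriv γ s) = ε₁)
    (hNN : ∀ s ∈ I, pform 1 (N s) (N s) = ε₂)
    (hBB : ∀ s ∈ I, pform 1 (B s) (B s) = ε₃)
    (hTN : ∀ s ∈ I, pform 1 (deriv γ s) (N s) = 0)
    (hTB : ∀ s ∈ I, pform 1 (deriv γ s) (B s) = 0)
    (hNB : ∀ s ∈ I, pform 1 (N s) (B s) = 0)
    (hNtan : ∀ s ∈ I, pform 1 (N s) (γ s) = 0)
    (hBtan : ∀ s ∈ I, pform 1 (B s) (γ s) = 0)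
    (hFr1 : ∀ s ∈ I, cov 1 c γ (deriv γ) s = (ε₂ * κ) • N s)
    (hFr2 : ∀ s ∈ I, cov 1 c γ N s = (-(ε₁ * κ)) • deriv γ s + (ε₃ * τ) • B s)
    (hFr3 : ∀ s ∈ I, cov 1 c γ B s = (-(ε₂ * τ)) • N s) :
    (ε₂ = 1 →
      ((∀ s ∈ I, tensionField 1 c r γ s = 0) ↔
        ((3 < r ∧ κ ^ 2 = τ ^ 2) ∨
         (c * ((r : ℝ) - 1) ≤ κ ^ 2 ∧
           (τ ^ 2 = (2 * κ ^ 2 - c + Real.sqrt (c ^ 2 + 4 * c * ((r : ℝ) - 2) * κ ^ 2)) / 2 ∨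
            τ ^ 2 = (2 * κ ^ 2 - c - Real.sqrt (c ^ 2 + 4 * c * ((r : ℝ) - 2) * κ ^ 2)) / 2)) ∨
         (κ ^ 2 < c * ((r : ℝ) - 1) ∧
           τ ^ 2 = (2 * κ ^ 2 - c + Real.sqrt (c ^ 2 + 4 * c * ((r : ℝ) - 2) * κ ^ 2)) / 2)))) ∧
    (ε₂ = -1 → ¬ (∀ s ∈ I, tensionField 1 c r γ s = 0)) := by
  have h2 : ε₂ * ε₂ = 1 := by
    rcases hone with ⟨_,h,_⟩|⟨_,h,_⟩|⟨_,h,_⟩ <;> rw [h] <;> norm_num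
  have h1e : ε₁ * ε₁ = 1 := by
    rcases hone with ⟨h,_,_⟩|⟨h,_,_⟩|⟨h,_,_⟩ <;> rw [h] <;> norm_num
  obtain ⟨μ, hμdef⟩ : ∃ μ : ℝ, μ = -ε₂ * (ε₁ * κ ^ 2 + ε₃ * τ ^ 2) := ⟨_, rfl⟩
  have hTdiff : ContDiffOn ℝ (⊤ : ℕ∞) (deriv γ) I := hγ.deriv_of_isOpen hIopen (by simp)
  have hTd : ∀ s ∈ I, DifferentiableAt ℝ (deriv γ) s := fun s hs =>
    (hTdiff.contDiffAt (hIopen.mem_nhds hs)).differentiableAt (by simp)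
  have hNd : ∀ s ∈ I, DifferentiableAt ℝ N s := fun s hs =>
    (hN.contDiffAt (hIopen.mem_nhds hs)).differentiableAt (by simp)
  have hBd : ∀ s ∈ I, DifferentiableAt ℝ B s := fun s hs =>
    (hB.contDiffAt (hIopen.mem_nhds hs)).differentiableAt (by simp)
  have frame : ∀ k, ∀ s ∈ I, (cov 1 c γ)^[k] (deriv γ) s
      = coefT ε₁ ε₂ κ μ k • deriv γ s + coefN ε₂ κ μ k • N s + coefB ε₂ ε₃ κ τ μ k • B s := by
    intro k
    induction k with
    | zero =>
      intro s hs
      simp [coefT, coefN, coefB]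
    | succ k ih =>
      intro s hs
      rw [Function.iterate_succ_apply']
      have hcongr : cov 1 c γ ((cov 1 c γ)^[k] (deriv γ)) s
          = cov 1 c γ (fun u => coefT ε₁ ε₂ κ μ k • deriv γ u + coefN ε₂ κ μ k • N u
              + coefB ε₂ ε₃ κ τ μ k • B u) s :=
        cov_congr_on hIopen ih hs
      rw [hcongr, cov_comb _ _ _ (hTd s hs) (hNd s hs) (hBd s hs),
          hFr1 s hs, hFr2 s hs, hFr3 s hs]
      obtain ⟨e1, e2, e3⟩ := coef_step ε₁ ε₂ ε₃ κ τ μ hμdef k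
      rw [e1, e2, e3]
      module
  have tension_eq : ∀ s ∈ I, tensionField 1 c r γ s
      = (coefN ε₂ κ μ (2*r-1) + ∑ ℓ ∈ Finset.range (r-1), c * ε₁ * (-1:ℝ)^ℓ *
          (coefT ε₁ ε₂ κ μ ℓ * coefN ε₂ κ μ (2*r-3-ℓ)
            - coefT ε₁ ε₂ κ μ (2*r-3-ℓ) * coefN ε₂ κ μ ℓ)) • N s := by
    intro s hs
    have hodd : ¬ Even (2*r-1) := by rw [Nat.even_iff]; omega
    have hsum : ∀ ℓ ∈ Finset.range (r-1),
        ((-1:ℝ)^ℓ) • curvOp 1 c ((cov 1 c γ)^[2*r-3-ℓ] (deriv γ) s)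
            ((cov 1 c γ)^[ℓ] (deriv γ) s) (deriv γ s)
        = (c * ε₁ * (-1:ℝ)^ℓ *
            (coefT ε₁ ε₂ κ μ ℓ * coefN ε₂ κ μ (2*r-3-ℓ)
              - coefT ε₁ ε₂ κ μ (2*r-3-ℓ) * coefN ε₂ κ μ ℓ)) • N s := by
      intro ℓ hℓ
      have hℓr : ℓ ≤ r - 2 := by simp only [Finset.mem_range] at hℓ; omega
      have pf : ∀ aT aN aB : ℝ,
          pform 1 (aT • deriv γ s + aN • N s + aB • B s) (deriv γ s) = aT * ε₁ := by
        intro aT aN aB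
        rw [pform_add_left, pform_add_left, pform_smul_left, pform_smul_left, pform_smul_left,
            hTT s hs, pform_comm (N s), hTN s hs, pform_comm (B s), hTB s hs]
        ring
      rw [frame ℓ s hs, frame (2*r-3-ℓ) s hs]
      simp only [curvOp]
      rw [pf, pf]
      rcases Nat.even_or_odd ℓ with he | ho
      · have h2r : ¬ Even (2*r-3-ℓ) := by rw [Nat.even_iff] at *; omega
        rw [coefT_odd ε₁ ε₂ κ μ h2r, coefB_odd ε₂ ε₃ κ τ μ h2r, coefN_even ε₂ κ μ he]
        module
      · have hone' : ¬ Even ℓ := Nat.not_even_iff_odd.mpr ho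
        have h2r : Even (2*r-3-ℓ) := by rw [Nat.even_iff]; rw [Nat.odd_iff] at ho; omega
        rw [coefT_odd ε₁ ε₂ κ μ hone', coefB_odd ε₂ ε₃ κ τ μ hone', coefN_even ε₂ κ μ h2r]
        module
    rw [tensionField, frame (2*r-1) s hs, Finset.sum_congr rfl hsum, ← Finset.sum_smul,
        coefT_odd ε₁ ε₂ κ μ hodd, coefB_odd ε₂ ε₃ κ τ μ hodd]
    module
  obtain ⟨s₀, hs₀⟩ := hIne
  have hN0 : N s₀ ≠ 0 := by
    intro h
    have h' := hNN s₀ hs₀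
    rw [h] at h'
    simp only [pform, Pi.zero_apply, mul_zero, neg_zero, ite_self, Finset.sum_const_zero] at h'
    rcases hone with ⟨_,h2',_⟩|⟨_,h2',_⟩|⟨_,h2',_⟩ <;> rw [h2'] at h' <;> norm_num at h'
  have ten_iff : (∀ s ∈ I, tensionField 1 c r γ s = 0) ↔
      (coefN ε₂ κ μ (2*r-1) + ∑ ℓ ∈ Finset.range (r-1), c * ε₁ * (-1:ℝ)^ℓ *
        (coefT ε₁ ε₂ κ μ ℓ * coefN ε₂ κ μ (2*r-3-ℓ)
          - coefT ε₁ ε₂ κ μ (2*r-3-ℓ) * coefN ε₂ κ μ ℓ)) = 0 := by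
    constructor
    · intro h
      have h0 := h s₀ hs₀
      rw [tension_eq s₀ hs₀] at h0
      rcases smul_eq_zero.1 h0 with h' | h'
      · exact h'
      · exact absurd h' hN0
    · intro h s hs
      rw [tension_eq s hs, h, zero_smul]
  have hCval : (coefN ε₂ κ μ (2*r-1) + ∑ ℓ ∈ Finset.range (r-1), c * ε₁ * (-1:ℝ)^ℓ *
        (coefT ε₁ ε₂ κ μ ℓ * coefN ε₂ κ μ (2*r-3-ℓ)
          - coefT ε₁ ε₂ κ μ (2*r-3-ℓ) * coefN ε₂ κ μ ℓ))
      = ε₂*κ*μ^(r-1) + c*ε₁*ε₂*κ*μ^(r-2) - c*κ^3*((r:ℝ)-2)*μ^(r-3) := by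
    have hodd : ¬ Even (2*r-1) := by rw [Nat.even_iff]; omega
    rw [coefN_odd ε₂ κ μ hodd, show (2*r-1)/2 = r-1 by omega,
        sum_eval r hr c ε₁ ε₂ κ μ h1e h2]
    ring
  rw [ten_iff, hCval]
  constructor
  · intro hε₂
    rcases hone with ⟨he1, he2, he3⟩ | ⟨he1, he2, he3⟩ | ⟨he1, he2, he3⟩
    · exact scalar_case1 r hr c κ τ ε₁ μ _ hc hκ hτ
        (Or.inl ⟨he1, by rw [hμdef, he1, he2, he3]; ring⟩)
        (by rw [he2]; ring)
    · rw [he2] at hε₂; norm_num at hε₂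
    · exact scalar_case1 r hr c κ τ ε₁ μ _ hc hκ hτ
        (Or.inr ⟨he1, by rw [hμdef, he1, he2, he3]; ring⟩)
        (by rw [he2]; ring)
  · intro hε₂
    rcases hone with ⟨he1, he2, he3⟩ | ⟨he1, he2, he3⟩ | ⟨he1, he2, he3⟩
    · rw [he2] at hε₂; norm_num at hε₂
    · exact scalar_case2 r hr c κ τ μ _ hc hκ hτ
        (by rw [hμdef, he1, he2, he3]; ring)
        (by rw [he1, he2]; ring)
    · rw [he2] at hε₂; norm_num at hε₂
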